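/- (Continuity from above implies closed level sets of the penalty) If ρ is a convex expectation on L^∞(μ) that is continuous from above (ρ(Xₙ) → ρ(X) whenever Xₙ decreases pointwise to X in L^∞(μ)), then for every constant u > max{0, −ρ(0)}, the level set G_u = {dP/dμ : P ≪ μ probability, ρ*(P) ≤ u} is closed under μ-a.e. convergence: if densities Gₙ ∈ G_u converge μ-a.e. to some G, then G is a probability density and belongs to G_u. -/

import Mathlib

open MeasureTheory Filter

/-- A convex expectation on `L^∞(μ)`: monotone, translation-invariant, convex. -/
def IsConvexExpectation {Ω : Type*} [MeasurableSpace Ω] (μ : Measure Ω) [IsFiniteMeasure μ]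
    (ρ : Lp ℝ ⊤ μ → ℝ) : Prop :=
  (∀ X Y : Lp ℝ ⊤ μ, Y ≤ X → ρ Y ≤ ρ X) ∧
  (∀ (X : Lp ℝ ⊤ μ) (c : ℝ), ρ (X + Lp.const ⊤ μ c) = ρ X + c) ∧
  (∀ (X Y : Lp ℝ ⊤ μ) (l : ℝ), 0 ≤ l → l ≤ 1 →
    ρ (l • X + (1 - l) • Y) ≤ l * ρ X + (1 - l) * ρ Y)


open scoped ENNReal

/-- `ρ` is continuous from above: along monotone decreasing sequences converging a.e.,
the values converge. -/
def ContinuousFromAbove {Ω : Type*} [MeasurableSpace Ω] (μ : Measure Ω) [IsFiniteMeasure μ]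
    (ρ : Lp ℝ ⊤ μ → ℝ) : Prop :=
  ∀ (Xs : ℕ → Lp ℝ ⊤ μ) (X : Lp ℝ ⊤ μ), Antitone Xs →
    (∀ᵐ ω ∂μ, Filter.Tendsto (fun n => Xs n ω) Filter.atTop (nhds (X ω))) →
    Filter.Tendsto (fun n => ρ (Xs n)) Filter.atTop (nhds (ρ X))

/-- The penalty function `ρ*(P) = sup_X (E_P[X] - ρ(X))`, valued in `EReal`. -/
noncomputable def penalty {Ω : Type*} [MeasurableSpace Ω] (μ : Measure Ω) [IsFiniteMeasure μ]
    (ρ : Lp ℝ ⊤ μ → ℝ) (P : Measure Ω) : EReal :=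
  ⨆ X : Lp ℝ ⊤ μ, ((∫ ω, X ω ∂P - ρ X : ℝ) : EReal)

/-- Continuity from above implies the level sets of the penalty function are closed under
`μ`-a.e. convergence of densities: any a.e. limit of densities with penalty at most `u` is
again a probability density whose measure has penalty at most `u`. -/
theorem levelSet_closed_of_continuousFromAbove {Ω : Type*} [MeasurableSpace Ω]
    (μ : Measure Ω) [IsProbabilityMeasure μ] (ρ : Lp ℝ ⊤ μ → ℝ)
    (hρ : IsConvexExpectation μ ρ) (hca : ContinuousFromAbove μ ρ)
    (u : ℝ) (hu : u > max 0 (-ρ 0))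
    (P : ℕ → Measure Ω) [∀ n, IsProbabilityMeasure (P n)] (hP : ∀ n, P n ≪ μ)
    (hlevel : ∀ n, penalty μ ρ (P n) ≤ (u : EReal))
    (g : Ω → ℝ≥0∞) (hg : Measurable g)
    (hconv : ∀ᵐ ω ∂μ, Filter.Tendsto (fun n => (P n).rnDeriv μ ω) Filter.atTop (nhds (g ω))) :
    IsProbabilityMeasure (μ.withDensity g) ∧ μ.withDensity g ≪ μ ∧
      penalty μ ρ (μ.withDensity g) ≤ (u : EReal) := by
  classical
  have hu0 : (0 : ℝ) < u := lt_of_le_of_lt (le_max_left _ _) hu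
  have huρ : -ρ 0 < u := lt_of_le_of_lt (le_max_right _ _) hu
  set f : ℕ → Ω → ℝ≥0∞ := fun n => (P n).rnDeriv μ with hfdef
  set G : ℕ → Ω → ℝ := fun n ω => (f n ω).toReal with hGdef
  set g' : Ω → ℝ := fun ω => (g ω).toReal with hg'def
  have hfmeas : ∀ n, Measurable (f n) := fun n => Measure.measurable_rnDeriv _ _
  have hGmeas : ∀ n, Measurable (G n) := fun n => (hfmeas n).ennreal_toReal
  have hg'meas : Measurable g' := hg.ennreal_toReal
  -- key inequality from the penalty bound
  have key : ∀ (n : ℕ) (X : Lp ℝ ⊤ μ), ∫ ω, X ω ∂(P n) ≤ ρ X + u := by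
    intro n X
    have h1 : ((∫ ω, X ω ∂(P n) - ρ X : ℝ) : EReal) ≤ (u : EReal) :=
      le_trans (le_iSup (fun X : Lp ℝ ⊤ μ => ((∫ ω, X ω ∂(P n) - ρ X : ℝ) : EReal)) X)
        (hlevel n)
    have h2 := EReal.coe_le_coe_iff.mp h1
    linarith
  have hint1 : ∀ n, ∫⁻ ω, f n ω ∂μ = 1 := by
    intro n
    rw [Measure.lintegral_rnDeriv (hP n)]
    simp
  have hGint : ∀ n, Integrable (G n) μ := fun n => Measure.integrable_toReal_rnDeriv
  have hGint1 : ∀ n, ∫ ω, G n ω ∂μ = 1 := by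
    intro n
    have := Measure.integral_toReal_rnDeriv (hP n)
    simpa using this
  have hgle : ∫⁻ ω, g ω ∂μ ≤ 1 := by
    have h1 : ∫⁻ ω, g ω ∂μ = ∫⁻ ω, Filter.liminf (fun n => f n ω) Filter.atTop ∂μ :=
      lintegral_congr_ae (hconv.mono fun ω h => h.liminf_eq.symm)
    rw [h1]
    refine le_trans (lintegral_liminf_le hfmeas) ?_
    simp [hint1]
  have hgfin : ∀ᵐ ω ∂μ, g ω < ∞ := ae_lt_top hg (hgle.trans_lt ENNReal.one_lt_top).ne
  -- Uniform integrability of the densities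
  have hui : UnifIntegrable G 1 μ := by
    by_contra hcon
    rw [UnifIntegrable] at hcon
    push_neg at hcon
    obtain ⟨ε, hε, hcon⟩ := hcon
    choose n A hAmeas hAsmall hAbig using fun k : ℕ => hcon ((1 / 2) ^ k) (by positivity)
    have hPA : ∀ k, ENNReal.ofReal ε < P (n k) (A k) := by
      intro k
      refine lt_of_lt_of_le (hAbig k) ?_
      have h1 : eLpNorm ((A k).indicator (G (n k))) 1 μ
          = ∫⁻ ω in A k, (‖G (n k) ω‖₊ : ℝ≥0∞) ∂μ := by
        rw [eLpNorm_one_eq_lintegral_enorm, ← lintegral_indicator (hAmeas k)]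
        congr 1; ext ω
        by_cases h : ω ∈ A k <;> simp [Set.indicator_apply, h, enorm_eq_nnnorm]
      rw [h1, ← Measure.setLIntegral_rnDeriv' (hP (n k)) (hAmeas k)]
      refine lintegral_mono fun ω => ?_
      rw [← enorm_eq_nnnorm, Real.enorm_eq_ofReal ENNReal.toReal_nonneg]
      exact ENNReal.ofReal_toReal_le
    have hPAtoReal : ∀ k, ε ≤ ((P (n k)) (A k)).toReal := fun k =>
      ((ENNReal.ofReal_lt_iff_lt_toReal hε.le (measure_ne_top _ _)).mp (hPA k)).le
    have hsum : ∑' k, μ (A k) ≠ ∞ := by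
      have h2 : ∑' k, μ (A k) ≤ ∑' k : ℕ, (2⁻¹ : ℝ≥0∞) ^ k := by
        refine ENNReal.tsum_le_tsum fun k => (hAsmall k).trans_eq ?_
        rw [ENNReal.ofReal_pow (by norm_num)]
        congr 1
        rw [one_div, ENNReal.ofReal_inv_of_pos two_pos]
        norm_num
      refine (h2.trans_lt ?_).ne
      rw [ENNReal.tsum_geometric, ENNReal.one_sub_inv_two]
      simp
    have hlimsup : μ (Filter.limsup A Filter.atTop) = 0 := measure_limsup_atTop_eq_zero hsum
    set c : ℝ := (u + ρ 0 + 1) / ε with hcdef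
    have hc : 0 < c := div_pos (by linarith) hε
    set S : ℕ → Set Ω := fun k => ⋃ j ∈ Set.Ici k, A j with hSdef
    have hSmeas : ∀ k, MeasurableSet (S k) :=
      fun k => MeasurableSet.biUnion (Set.to_countable _) fun j _ => hAmeas j
    have hSanti : Antitone S := fun k l hkl =>
      Set.biUnion_subset_biUnion_left (Set.Ici_subset_Ici.mpr hkl)
    have hAS : ∀ k, A k ⊆ S k := fun k => Set.subset_biUnion_of_mem (Set.self_mem_Ici)
    set X : ℕ → Lp ℝ ⊤ μ := fun k => indicatorConstLp ⊤ (hSmeas k) (measure_ne_top μ _) c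
      with hXdef
    have hXcoe : ∀ k, (X k : Ω → ℝ) =ᵐ[μ] (S k).indicator fun _ => c :=
      fun k => indicatorConstLp_coeFn
    have hXanti : Antitone X := by
      intro k l hkl
      rw [← Lp.coeFn_le]
      filter_upwards [hXcoe k, hXcoe l] with ω h1 h2
      rw [h1, h2]
      exact Set.indicator_le_indicator_of_subset (hSanti hkl) (fun _ => hc.le) ω
    have hXtend : ∀ᵐ ω ∂μ, Filter.Tendsto (fun k => X k ω) Filter.atTop
        (nhds ((0 : Lp ℝ ⊤ μ) ω)) := by
      have hz := Lp.coeFn_zero (E := ℝ) (p := (⊤ : ℝ≥0∞)) (μ := μ)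
      have hind := ae_all_iff.mpr hXcoe
      have hnotin : ∀ᵐ ω ∂μ, ω ∉ Filter.limsup A Filter.atTop := by
        rw [ae_iff]
        simpa using hlimsup
      filter_upwards [hind, hnotin, hz] with ω h1 h2 h3
      rw [h3, Pi.zero_apply]
      have hex : ∃ k₀, ω ∉ S k₀ := by
        rw [limsup_eq_iInf_iSup_of_nat] at h2
        simp only [Set.iInf_eq_iInter, Set.iSup_eq_iUnion, Set.mem_iInter, Set.mem_iUnion,
          not_forall, not_exists] at h2
        obtain ⟨k₀, hk₀⟩ := h2
        refine ⟨k₀, ?_⟩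
        simp only [hSdef, Set.mem_iUnion, Set.mem_Ici, not_exists]
        intro j hj
        exact hk₀ j hj
      obtain ⟨k₀, hk₀⟩ := hex
      refine tendsto_atTop_of_eventually_const (i₀ := k₀) fun k hk => ?_
      rw [h1 k]
      exact Set.indicator_of_notMem (fun hmem => hk₀ (hSanti hk hmem)) _
    have hρtend := hca X 0 hXanti hXtend
    have hlow : ∀ k, c * ε ≤ ρ (X k) + u := by
      intro k
      have h1 : ∫ ω, X k ω ∂(P (n k)) = ((P (n k)) (S k)).toReal • c := by
        rw [integral_congr_ae ((hP (n k)).ae_eq (hXcoe k))]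
        exact integral_indicator_const c (hSmeas k)
      have h2 : ε ≤ ((P (n k)) (S k)).toReal :=
        le_trans (hPAtoReal k)
          (ENNReal.toReal_mono (measure_ne_top _ _) (measure_mono (hAS k)))
      have h3 := key (n k) (X k)
      rw [h1, smul_eq_mul] at h3
      nlinarith
    have hfin : c * ε ≤ ρ 0 + u :=
      ge_of_tendsto (hρtend.add tendsto_const_nhds) (Filter.Eventually.of_forall hlow)
    have hce : c * ε = u + ρ 0 + 1 := div_mul_cancel₀ _ hε.ne'
    linarith
  -- the limit density
  have hg'int : Integrable g' μ :=
    integrable_toReal_of_lintegral_ne_top hg.aemeasurable (hgle.trans_lt ENNReal.one_lt_top).ne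
  have hg'mem : MemLp g' 1 μ := memLp_one_iff_integrable.mpr hg'int
  have hconv' : ∀ᵐ ω ∂μ, Filter.Tendsto (fun k => G k ω) Filter.atTop (nhds (g' ω)) := by
    filter_upwards [hconv, hgfin] with ω h1 h2
    exact (ENNReal.tendsto_toReal h2.ne).comp h1
  have hL1 : Filter.Tendsto (fun k => eLpNorm (G k - g') 1 μ) Filter.atTop (nhds 0) :=
    tendsto_Lp_finite_of_tendsto_ae le_rfl ENNReal.one_ne_top
      (fun k => (hGmeas k).aestronglyMeasurable) hg'mem hui hconv'
  have hL1' : Filter.Tendsto (fun k => ∫⁻ ω, (‖G k ω - g' ω‖₊ : ℝ≥0∞) ∂μ) Filter.atTop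
      (nhds 0) := by
    simpa [eLpNorm_one_eq_lintegral_enorm, enorm_eq_nnnorm] using hL1
  have hint_g' : ∫ ω, g' ω ∂μ = 1 := by
    have h1 := tendsto_integral_of_L1 g' hg'int.aestronglyMeasurable (Filter.Eventually.of_forall hGint) hL1'
    have h2 : Filter.Tendsto (fun k => ∫ ω, G k ω ∂μ) Filter.atTop (nhds 1) := by
      simpa [hGint1] using (tendsto_const_nhds : Filter.Tendsto (fun _ : ℕ => (1:ℝ)) _ _)
    exact tendsto_nhds_unique h1 h2
  have hlint_g : ∫⁻ ω, g ω ∂μ = 1 := by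
    have h1 : ∫⁻ ω, g ω ∂μ = ∫⁻ ω, ENNReal.ofReal (g' ω) ∂μ :=
      lintegral_congr_ae (hgfin.mono fun ω h => (ENNReal.ofReal_toReal h.ne).symm)
    rw [h1, ← ofReal_integral_eq_lintegral_ofReal hg'int
      (Filter.Eventually.of_forall fun ω => ENNReal.toReal_nonneg), hint_g']
    simp
  have hprob : IsProbabilityMeasure (μ.withDensity g) := by
    constructor
    rw [withDensity_apply _ MeasurableSet.univ, setLIntegral_univ, hlint_g]
  haveI := hprob
  have hQ : μ.withDensity g ≪ μ := withDensity_absolutelyContinuous μ g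
  refine ⟨hprob, hQ, ?_⟩
  rw [penalty]
  refine iSup_le fun X => ?_
  refine EReal.coe_le_coe_iff.mpr ?_
  rw [sub_le_iff_le_add, add_comm]
  -- boundedness of X
  have hXb : ∀ᵐ ω ∂μ, ‖X ω‖ ≤ ‖X‖ := by
    filter_upwards [ae_le_eLpNormEssSup (f := (X : Ω → ℝ)) (μ := μ)] with ω hω
    have h1 : ‖X ω‖ = ((‖X ω‖₊ : ℝ≥0∞)).toReal := by simp
    rw [Lp.norm_def, h1]
    refine ENNReal.toReal_mono (Lp.eLpNorm_ne_top X) ?_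
    rwa [eLpNorm_exponent_top]
  have hX'meas : AEStronglyMeasurable (X : Ω → ℝ) μ := Lp.aestronglyMeasurable X
  have hFint : ∀ k, Integrable (fun ω => X ω * G k ω) μ :=
    fun k => (hGint k).bdd_mul hX'meas hXb
  have hfint : Integrable (fun ω => X ω * g' ω) μ := hg'int.bdd_mul hX'meas hXb
  have hXtop : eLpNormEssSup (X : Ω → ℝ) μ ≠ ∞ := by
    rw [← eLpNorm_exponent_top]; exact Lp.eLpNorm_ne_top X
  have hlim : Filter.Tendsto (fun k => ∫ ω, X ω * G k ω ∂μ) Filter.atTop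
      (nhds (∫ ω, X ω * g' ω ∂μ)) := by
    refine tendsto_integral_of_L1 _ hfint.aestronglyMeasurable (Filter.Eventually.of_forall hFint) ?_
    have hCle : ∀ k, ∫⁻ ω, (‖X ω * G k ω - X ω * g' ω‖₊ : ℝ≥0∞) ∂μ
        ≤ eLpNormEssSup (X : Ω → ℝ) μ * ∫⁻ ω, (‖G k ω - g' ω‖₊ : ℝ≥0∞) ∂μ := by
      intro k
      rw [← lintegral_const_mul' _ _ hXtop]
      refine lintegral_mono_ae ?_
      filter_upwards [ae_le_eLpNormEssSup (f := (X : Ω → ℝ)) (μ := μ)] with ω hω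
      calc (‖X ω * G k ω - X ω * g' ω‖₊ : ℝ≥0∞)
          = (‖X ω‖₊ : ℝ≥0∞) * (‖G k ω - g' ω‖₊ : ℝ≥0∞) := by
            rw [← mul_sub, nnnorm_mul]; push_cast; ring
        _ ≤ eLpNormEssSup (X : Ω → ℝ) μ * (‖G k ω - g' ω‖₊ : ℝ≥0∞) :=
            mul_le_mul_left hω _
    have hupper : Filter.Tendsto
        (fun k => eLpNormEssSup (X : Ω → ℝ) μ * ∫⁻ ω, (‖G k ω - g' ω‖₊ : ℝ≥0∞) ∂μ)
        Filter.atTop (nhds 0) := by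
      have := ENNReal.Tendsto.const_mul hL1' (Or.inr hXtop)
      simpa using this
    exact tendsto_of_tendsto_of_tendsto_of_le_of_le tendsto_const_nhds hupper
      (fun k => zero_le) hCle
  have hPint : ∀ k, ∫ ω, X ω * G k ω ∂μ = ∫ ω, X ω ∂(P k) := by
    intro k
    rw [← integral_rnDeriv_smul (hP k)]
    refine integral_congr_ae (Filter.Eventually.of_forall fun ω => ?_)
    simp [hGdef, hfdef, smul_eq_mul, mul_comm]
  have hQint : ∫ ω, X ω * g' ω ∂μ = ∫ ω, X ω ∂(μ.withDensity g) := by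
    rw [← integral_rnDeriv_smul hQ]
    refine integral_congr_ae ?_
    filter_upwards [Measure.rnDeriv_withDensity μ hg] with ω hω
    simp [hω, hg'def, smul_eq_mul, mul_comm]
  rw [← hQint]
  refine le_of_tendsto hlim (Filter.Eventually.of_forall fun k => ?_)
  rw [hPint k]
  exact key k X
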